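/- arXiv:2409.17362 — 2 statements merged into one kernel-verified Lean document; each statement's English description precedes it below -/
import Mathlib

section
/- Let U be a nonempty connected open subset of ℂ^d and let A : U → Matrix (Fin m) (Fin n) ℂ be a family of complex m × n matrices each of whose entries x ↦ (A x)ᵢⱼ is holomorphic on U. Let r be the maximal value of rank(A x) for x ∈ U, and set Z = { x ∈ U | rank(A x) < r }. Then the set { x ∈ U | rank(A x) = r } is open (so Z is relatively closed in U), and Z has empty interior. -/
/-!
At a point of maximal rank `r` some `r × r` minor of `A` is nonzero; the minor is holomorphic,
so it stays nonzero nearby, which forces rank `r` there.  On an open subset of the degeneracy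
locus every `r × r` minor vanishes, so by the identity theorem (proved by restricting to complex
lines) the chosen minor would vanish on all of the connected set `U`, in particular at the point
where it was chosen nonzero.
-/

open Set Filter Topology Metric

section IdentityTheorem

variable {E F : Type*} [NormedAddCommGroup E] [NormedSpace ℂ E]
  [NormedAddCommGroup F] [NormedSpace ℂ F] [CompleteSpace F] {f : E → F}

theorem DifferentiableOn.eqOn_zero_of_convex_of_eventuallyEq_zero {s : Set E} {c : E}
    (hf : DifferentiableOn ℂ f s) (hs : IsOpen s) (hs' : Convex ℝ s) (hc : c ∈ s)
    (h : f =ᶠ[𝓝 c] 0) : EqOn f 0 s := by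
  intro w hw
  -- the complex line through `c` and `w`, on which `f` is a holomorphic function of one variable
  set L : ℂ → E := fun t => t • (w - c) + c
  have hL : Continuous L := by fun_prop
  have hT : IsPreconnected (L ⁻¹' s) :=
    ((hs'.translate_preimage_left c).linear_preimage
      ((LinearMap.toSpanSingleton ℂ E (w - c)).restrictScalars ℝ)).isPreconnected
  have hfL : AnalyticOnNhd ℂ (f ∘ L) (L ⁻¹' s) :=
    (hf.comp (by fun_prop) (mapsTo_preimage L s)).analyticOnNhd (hs.preimage hL)
  have h0 : f ∘ L =ᶠ[𝓝 0] 0 :=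
    h.comp_tendsto (by simpa [L] using hL.tendsto 0)
  simpa [L] using hfL.eqOn_zero_of_preconnected_of_eventuallyEq_zero hT
    (by simpa [L] using hc) h0 (show L 1 ∈ s by simpa [L] using hw)

theorem DifferentiableOn.eqOn_zero_of_isPreconnected_of_eventuallyEq_zero {U : Set E} {c : E}
    (hf : DifferentiableOn ℂ f U) (hU : IsOpen U) (hU' : IsPreconnected U) (hc : c ∈ U)
    (h : f =ᶠ[𝓝 c] 0) : EqOn f 0 U := by
  have hS : IsOpen {x | f =ᶠ[𝓝 x] 0} := isOpen_setOfPred_eventually_nhds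
  suffices hUS : U ⊆ {x | f =ᶠ[𝓝 x] 0} from fun x hx => (hUS hx).eq_of_nhds
  refine hU'.subset_of_closure_inter_subset hS ⟨c, hc, h⟩ ?_
  rintro x ⟨hxS, hxU⟩
  obtain ⟨R, hR, hRU⟩ := Metric.isOpen_iff.mp hU x hxU
  obtain ⟨y, hyS, hyx⟩ := Metric.mem_closure_iff.mp hxS R hR
  have hy : y ∈ ball x R := by rwa [mem_ball, dist_comm]
  exact eventuallyEq_of_mem (ball_mem_nhds x hR) <|
    (hf.mono hRU).eqOn_zero_of_convex_of_eventuallyEq_zero isOpen_ball (convex_ball x R) hy hyS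

end IdentityTheorem

theorem DifferentiableOn.matrix_det {𝕜 E ι : Type*} [NontriviallyNormedField 𝕜]
    [NormedAddCommGroup E] [NormedSpace 𝕜 E]
    [Fintype ι] [DecidableEq ι] {M : E → Matrix ι ι 𝕜} {s : Set E}
    (hM : ∀ i j, DifferentiableOn 𝕜 (fun x => M x i j) s) :
    DifferentiableOn 𝕜 (fun x => (M x).det) s := by
  simp only [Matrix.det_apply']
  refine .fun_sum fun σ _ => (differentiableOn_const _).mul fun x hx => ?_
  exact (HasFDerivWithinAt.finsetProd fun i _ => (hM (σ i) i x hx).hasFDerivWithinAt)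
    |>.differentiableWithinAt

namespace Matrix

variable {K m n : Type*} [Field K] [Fintype m] [Fintype n]

omit [Fintype m] in
theorem le_rank_of_det_submatrix_ne_zero {k : Type*} [Fintype k] [DecidableEq k]
    (A : Matrix m n K) (r : k → m) (c : k → n) (h : (A.submatrix r c).det ≠ 0) : Fintype.card k ≤ A.rank := by
  rw [← rank_of_isUnit _ ((isUnit_iff_isUnit_det _).mpr h.isUnit)]
  exact rank_submatrix_le A r c

theorem exists_linearIndependent_row_submatrix_of_rank_eq {k : ℕ} (A : Matrix m n K)
    (hA : A.rank = k) : ∃ r : Fin k → m, LinearIndependent K (A.submatrix r id).row := by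
  subst hA
  rw [rank_eq_finrank_span_row]
  obtain ⟨v, hv, -, hli⟩ := Submodule.exists_fun_fin_finrank_span_eq K (range A.row)
  choose r hr using hv
  have hrv : (A.submatrix r id).row = v := funext hr
  exact ⟨r, hrv ▸ hli⟩

theorem exists_det_submatrix_ne_zero_of_rank_eq {k : ℕ} (A : Matrix m n K) (hA : A.rank = k) :
    ∃ (r : Fin k → m) (c : Fin k → n), (A.submatrix r c).det ≠ 0 := by
  obtain ⟨r, hr⟩ := A.exists_linearIndependent_row_submatrix_of_rank_eq hA
  have hBt : (A.submatrix r id)ᵀ.rank = k := by rw [rank_transpose, hr.rank_matrix, Fintype.card_fin]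
  obtain ⟨c, hc⟩ := (A.submatrix r id)ᵀ.exists_linearIndependent_row_submatrix_of_rank_eq hBt
  refine ⟨r, c, ?_⟩
  rw [← det_transpose]
  exact ((isUnit_iff_isUnit_det _).mp (linearIndependent_rows_iff_isUnit.mp hc)).ne_zero

end Matrix

/-- Let `U ⊆ ℂ^d` be a nonempty connected open set and `A` a family of complex
`m × n` matrices whose entries are holomorphic on `U`.  If `r` is the maximal value of
`rank (A x)` on `U`, then the set where the rank equals `r` is open (so the degeneracy
locus `Z = {x ∈ U | rank (A x) < r}` is relatively closed in `U`), and `Z` has empty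
interior. -/
theorem holomorphic_matrix_rank_degeneracy_locus {d m n : ℕ}
    (U : Set (EuclideanSpace ℂ (Fin d))) (hUopen : IsOpen U) (hUconn : IsConnected U)
    (A : EuclideanSpace ℂ (Fin d) → Matrix (Fin m) (Fin n) ℂ)
    (hA : ∀ i j, DifferentiableOn ℂ (fun x => A x i j) U)
    (r : ℕ) (hr : IsGreatest ((fun x => (A x).rank) '' U) r) :
    IsOpen {x | x ∈ U ∧ (A x).rank = r} ∧
      interior {x | x ∈ U ∧ (A x).rank < r} = ∅ := by
  have hle : ∀ x ∈ U, (A x).rank ≤ r := fun x hx => hr.2 ⟨x, hx, rfl⟩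
  have hminor (ρ : Fin r → Fin m) (γ : Fin r → Fin n) :
      DifferentiableOn ℂ (fun x => ((A x).submatrix ρ γ).det) U :=
    .matrix_det fun i j => hA (ρ i) (γ j)
  refine ⟨isOpen_iff_mem_nhds.mpr ?_, ?_⟩
  · rintro x₀ ⟨hx₀U, hx₀⟩
    obtain ⟨ρ, γ, hdet⟩ := (A x₀).exists_det_submatrix_ne_zero_of_rank_eq hx₀
    have hcont := (hminor ρ γ).continuousOn.continuousAt (hUopen.mem_nhds hx₀U)
    filter_upwards [hcont.eventually_ne hdet, hUopen.mem_nhds hx₀U] with x hx hxU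
    have hrx := (A x).le_rank_of_det_submatrix_ne_zero ρ γ hx
    rw [Fintype.card_fin] at hrx
    exact ⟨hxU, (hle x hxU).antisymm hrx⟩
  · obtain ⟨x₀, hx₀U, hx₀⟩ := hr.1
    obtain ⟨ρ, γ, hdet⟩ := (A x₀).exists_det_submatrix_ne_zero_of_rank_eq hx₀
    refine eq_empty_iff_forall_notMem.mpr fun x₁ hx₁ => hdet ?_
    have hvanish : (fun x => ((A x).submatrix ρ γ).det) =ᶠ[𝓝 x₁] 0 := by
      refine eventuallyEq_of_mem (isOpen_interior.mem_nhds hx₁) fun x hx => ?_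
      by_contra hx'
      have hrx := (A x).le_rank_of_det_submatrix_ne_zero ρ γ hx'
      rw [Fintype.card_fin] at hrx
      exact (interior_subset hx).2.not_ge hrx
    exact (hminor ρ γ).eqOn_zero_of_isPreconnected_of_eventuallyEq_zero hUopen
      hUconn.isPreconnected (interior_subset hx₁).1 hvanish hx₀U
end

section
/- Let U be an open subset of ℝ^d and let A : U → Matrix (Fin m) (Fin n) ℂ be a family of complex m × n matrices each of whose entries is C^∞ on U (smooth as a map into the real vector space of matrices), and suppose that rank(A x) = r for a fixed r and all x ∈ U. Then there exists a C^∞ family S : U → Matrix (Fin n) (Fin m) ℂ such that for every x ∈ U, the linear map w ↦ (S x) · w from ℂ^m to ℂ^n is the minimal right inverse of the linear map v ↦ (A x) · v from ℂ^n to ℂ^m, with respect to the standard Hermitian inner products: (1) (A x)(S x) y = y for every y in the column space of A x; (2) (S x) y = 0 for every y orthogonal to the column space of A x; (3) the column space of S x is orthogonal to the kernel of A x. -/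
open scoped ComplexConjugate
open Matrix Polynomial Finset

namespace SmoothMRI

variable {d : ℕ} {U : Set (EuclideanSpace ℝ (Fin d))}

/-- Entrywise smoothness of a matrix family. -/
def SM {a b : ℕ} (U : Set (EuclideanSpace ℝ (Fin d)))
    (M : EuclideanSpace ℝ (Fin d) → Matrix (Fin a) (Fin b) ℂ) : Prop :=
  ∀ i j, ContDiffOn ℝ (⊤ : ℕ∞) (fun x => M x i j) U

lemma contDiffOn_conj {f : EuclideanSpace ℝ (Fin d) → ℂ} (hf : ContDiffOn ℝ (⊤ : ℕ∞) f U) :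
    ContDiffOn ℝ (⊤ : ℕ∞) (fun x => conj (f x)) U :=
  Complex.conjCLE.contDiff.comp_contDiffOn hf

lemma SM.mul {a b c : ℕ} {M : EuclideanSpace ℝ (Fin d) → Matrix (Fin a) (Fin b) ℂ}
    {N : EuclideanSpace ℝ (Fin d) → Matrix (Fin b) (Fin c) ℂ}
    (hM : SM U M) (hN : SM U N) : SM U (fun x => M x * N x) := by
  intro i j
  have h : (fun x => (M x * N x) i j) = fun x => ∑ k, M x i k * N x k j := by
    funext x; simp [Matrix.mul_apply]
  rw [h]
  exact ContDiffOn.sum fun k _ => (hM i k).mul (hN k j)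

lemma SM.conjTranspose {a b : ℕ} {M : EuclideanSpace ℝ (Fin d) → Matrix (Fin a) (Fin b) ℂ}
    (hM : SM U M) : SM U (fun x => (M x)ᴴ) := fun i j => contDiffOn_conj (hM j i)

lemma SM.pow {a : ℕ} {M : EuclideanSpace ℝ (Fin d) → Matrix (Fin a) (Fin a) ℂ}
    (hM : SM U M) (k : ℕ) : SM U (fun x => (M x) ^ k) := by
  induction k with
  | zero => intro i j; simp only [pow_zero]; exact contDiffOn_const
  | succ k ih =>
    have := SM.mul ih hM
    intro i j
    simpa only [pow_succ] using this i j

lemma SM.det {a : ℕ} {M : EuclideanSpace ℝ (Fin d) → Matrix (Fin a) (Fin a) ℂ}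
    (hM : SM U M) : ContDiffOn ℝ (⊤ : ℕ∞) (fun x => (M x).det) U := by
  have h : (fun x => (M x).det)
      = fun x => ∑ σ : Equiv.Perm (Fin a), ((Equiv.Perm.sign σ : ℤ) : ℂ) * ∏ i, M x (σ i) i := by
    funext x; rw [Matrix.det_apply']
  rw [h]
  refine ContDiffOn.sum fun σ _ => contDiffOn_const.mul ?_
  have := contDiffOn_prod' (𝕜 := ℝ) (t := (Finset.univ : Finset (Fin a)))
    (f := fun i x => M x (σ i) i) (fun i _ => hM (σ i) i)
  refine this.congr fun x _ => ?_
  simp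

/-- Evaluation of the characteristic polynomial. -/
lemma eval_charpoly {N : ℕ} (M : Matrix (Fin N) (Fin N) ℂ) (t : ℂ) :
    M.charpoly.eval t = (t • (1 : Matrix (Fin N) (Fin N) ℂ) - M).det := by
  have h : M.charpoly.eval t = ((evalRingHom t).mapMatrix (charmatrix M)).det := by
    rw [Matrix.charpoly, ← RingHom.map_det]; rfl
  rw [h]
  congr 1
  ext i j
  by_cases hij : i = j
  · subst hij
    simp [charmatrix_apply_eq, Matrix.one_apply]
  · simp [charmatrix_apply_ne _ _ _ hij, Matrix.one_apply, hij]

lemma vandermonde_det_ne_zero (N : ℕ) :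
    (Matrix.vandermonde (fun j : Fin (N + 1) => ((j : ℕ) : ℂ))).det ≠ 0 := by
  rw [Matrix.det_vandermonde]
  refine Finset.prod_ne_zero_iff.mpr fun i _ => Finset.prod_ne_zero_iff.mpr fun j hj => ?_
  have hij' : i < j := Finset.mem_Ioi.mp hj
  have hij : (i : ℕ) < (j : ℕ) := hij'
  exact sub_ne_zero.mpr (by exact_mod_cast hij.ne')

lemma charpoly_coeff_eq {N : ℕ} (M : Matrix (Fin N) (Fin N) ℂ) (k : Fin (N + 1)) :
    M.charpoly.coeff k =
      ∑ j, (Matrix.vandermonde (fun j : Fin (N + 1) => ((j : ℕ) : ℂ)))⁻¹ k j *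
        (((j : ℕ) : ℂ) • (1 : Matrix (Fin N) (Fin N) ℂ) - M).det := by
  set V := Matrix.vandermonde (fun j : Fin (N + 1) => ((j : ℕ) : ℂ)) with hVdef
  have hdeg : M.charpoly.natDegree < N + 1 := by
    rw [Matrix.charpoly_natDegree_eq_dim]
    simp
  have hV : V *ᵥ (fun i : Fin (N + 1) => M.charpoly.coeff i)
      = fun j : Fin (N + 1) => M.charpoly.eval ((j : ℕ) : ℂ) := by
    funext j
    rw [Matrix.mulVec, dotProduct]
    rw [Polynomial.eval_eq_sum_range' hdeg, Finset.sum_range]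
    refine Finset.sum_congr rfl fun i _ => ?_
    simp [hVdef, Matrix.vandermonde, mul_comm]
  have hcoeff : (fun i : Fin (N + 1) => M.charpoly.coeff i)
      = V⁻¹ *ᵥ (fun j : Fin (N + 1) => M.charpoly.eval ((j : ℕ) : ℂ)) := by
    rw [← hV, Matrix.mulVec_mulVec, Matrix.nonsing_inv_mul _
      (isUnit_iff_ne_zero.mpr (vandermonde_det_ne_zero N)), Matrix.one_mulVec]
  have := congrFun hcoeff k
  rw [this, Matrix.mulVec, dotProduct]
  refine Finset.sum_congr rfl fun j _ => ?_
  rw [eval_charpoly]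

lemma contDiffOn_charpoly_coeff {a : ℕ} {M : EuclideanSpace ℝ (Fin d) → Matrix (Fin a) (Fin a) ℂ}
    (hM : SM U M) (k : ℕ) (hk : k ≤ a) :
    ContDiffOn ℝ (⊤ : ℕ∞) (fun x => (M x).charpoly.coeff k) U := by
  have h : (fun x => (M x).charpoly.coeff k)
      = fun x => ∑ j, (Matrix.vandermonde (fun j : Fin (a + 1) => ((j : ℕ) : ℂ)))⁻¹
          ⟨k, by omega⟩ j *
          (((j : ℕ) : ℂ) • (1 : Matrix (Fin a) (Fin a) ℂ) - M x).det := by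
    funext x
    have := charpoly_coeff_eq (M x) ⟨k, by omega⟩
    simpa using this
  rw [h]
  refine ContDiffOn.sum fun j _ => contDiffOn_const.mul (SM.det ?_)
  intro i l
  have h2 : (fun x => (((j : ℕ) : ℂ) • (1 : Matrix (Fin a) (Fin a) ℂ) - M x) i l)
      = fun x => ((j : ℕ) : ℂ) * (1 : Matrix (Fin a) (Fin a) ℂ) i l - M x i l := by
    funext x; simp [Matrix.sub_apply, Matrix.smul_apply, smul_eq_mul]
  rw [h2]
  exact contDiffOn_const.sub (hM i l)

end SmoothMRI

namespace SmoothMRI2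

lemma charpoly_eq_prod {N : ℕ} {M : Matrix (Fin N) (Fin N) ℂ} (hM : M.IsHermitian) :
    M.charpoly = ∏ i, (X - C ((hM.eigenvalues i : ℝ) : ℂ)) := by
  apply Polynomial.funext
  intro t
  rw [SmoothMRI.eval_charpoly]
  set U : Matrix (Fin N) (Fin N) ℂ := (Matrix.IsHermitian.eigenvectorUnitary hM : Matrix (Fin N) (Fin N) ℂ) with hU
  have hUU : U * star U = 1 := (Matrix.mem_unitaryGroup_iff).mp (Matrix.IsHermitian.eigenvectorUnitary hM).2
  have key : t • (1 : Matrix (Fin N) (Fin N) ℂ) - M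
      = U * ((t • (1 : Matrix (Fin N) (Fin N) ℂ)) - Matrix.diagonal (RCLike.ofReal ∘ hM.eigenvalues)) * star U := by
    rw [Matrix.mul_sub, Matrix.sub_mul]
    congr 1
    · rw [Matrix.mul_smul, Matrix.mul_one, Matrix.smul_mul, hUU]
    · rw [hU]; exact hM.spectral_theorem
  rw [key, Matrix.det_mul, Matrix.det_mul, mul_right_comm, ← Matrix.det_mul, hUU, Matrix.det_one, one_mul]
  have hdiag : (t • (1 : Matrix (Fin N) (Fin N) ℂ)) - Matrix.diagonal (RCLike.ofReal ∘ hM.eigenvalues)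
      = Matrix.diagonal (fun i => t - ((hM.eigenvalues i : ℝ) : ℂ)) := by
    ext i j
    by_cases hij : i = j
    · subst hij; simp [Matrix.one_apply, Matrix.diagonal_apply]
    · simp [Matrix.one_apply, Matrix.diagonal_apply, hij]
  rw [hdiag, Matrix.det_diagonal]
  simp [Polynomial.eval_prod]

lemma coeff_facts {N r : ℕ} {M : Matrix (Fin N) (Fin N) ℂ} (hM : M.IsHermitian)
    (hrank : M.rank = r) :
    (∀ j < N - r, M.charpoly.coeff j = 0) ∧ M.charpoly.coeff (N - r) ≠ 0 ∧
      (∀ k, conj (M.charpoly.coeff k) = M.charpoly.coeff k) := by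
  classical
  set μ := hM.eigenvalues with hμ
  set NZ : Finset (Fin N) := Finset.univ.filter (fun i => μ i ≠ 0) with hNZ
  have hcardNZ : NZ.card = r := by
    rw [← hrank, hM.rank_eq_card_non_zero_eigs, Fintype.card_subtype]
  have hcardC : NZᶜ.card = N - r := by
    rw [Finset.card_compl, hcardNZ]
    simp
  set q : Polynomial ℂ := ∏ i ∈ NZ, (X - C ((μ i : ℝ) : ℂ)) with hq
  have hsplit : M.charpoly = X ^ (N - r) * q := by
    rw [charpoly_eq_prod hM, ← Finset.prod_mul_prod_compl NZ, mul_comm]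
    congr 1
    rw [← hcardC, ← Finset.prod_const]
    refine Finset.prod_congr rfl fun i hi => ?_
    have : μ i = 0 := by
      simp only [hNZ, Finset.mem_compl, Finset.mem_filter, Finset.mem_univ, true_and,
        not_not] at hi
      exact hi
    rw [show hM.eigenvalues i = 0 from this]
    simp
  refine ⟨?_, ?_, ?_⟩
  · intro j hj
    have hdvd : (X : Polynomial ℂ) ^ (N - r) ∣ M.charpoly := by
      rw [hsplit]; exact dvd_mul_right _ _
    exact (Polynomial.X_pow_dvd_iff.mp hdvd) j hj
  · rw [hsplit]
    have h0 : ((X : Polynomial ℂ) ^ (N - r) * q).coeff (0 + (N - r)) = q.coeff 0 :=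
      Polynomial.coeff_X_pow_mul q (N - r) 0
    rw [zero_add] at h0
    rw [h0, Polynomial.coeff_zero_eq_eval_zero, hq, Polynomial.eval_prod]
    refine Finset.prod_ne_zero_iff.mpr fun i hi => ?_
    have : μ i ≠ 0 := by
      simp only [hNZ, Finset.mem_filter, Finset.mem_univ, true_and] at hi
      exact hi
    simp only [Polynomial.eval_sub, Polynomial.eval_X, Polynomial.eval_C, zero_sub, neg_ne_zero]
    exact_mod_cast this
  · intro k
    have hmap : M.charpoly.map (starRingEnd ℂ) = M.charpoly := by
      rw [charpoly_eq_prod hM, Polynomial.map_prod]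
      refine Finset.prod_congr rfl fun i _ => ?_
      rw [Polynomial.map_sub, Polynomial.map_X, Polynomial.map_C, Complex.conj_ofReal]
    conv_rhs => rw [← hmap]
    rw [Polynomial.coeff_map]

end SmoothMRI2

namespace SmoothMRI3
open SmoothMRI2
open scoped ComplexOrder

/-- The candidate minimal right inverse. -/
noncomputable def Smat {m n : ℕ} (r : ℕ) (B : Matrix (Fin m) (Fin n) ℂ) :
    Matrix (Fin n) (Fin m) ℂ :=
  (-((B * Bᴴ).charpoly.coeff (m - r))⁻¹) •
    ∑ i ∈ Finset.range r, (B * Bᴴ).charpoly.coeff (m - r + 1 + i) • (Bᴴ * (B * Bᴴ) ^ i)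

lemma herm_sq_cancel {N q : ℕ} {G : Matrix (Fin N) (Fin N) ℂ} (hG : G.IsHermitian)
    (W : Matrix (Fin N) (Fin q) ℂ) (h : G * (G * W) = 0) : G * W = 0 := by
  rw [← Matrix.conjTranspose_mul_self_eq_zero (A := G * W)]
  calc (G * W)ᴴ * (G * W) = Wᴴ * Gᴴ * (G * W) := by rw [Matrix.conjTranspose_mul]
    _ = Wᴴ * (G * (G * W)) := by rw [hG.eq, Matrix.mul_assoc]
    _ = 0 := by rw [h, Matrix.mul_zero]

lemma herm_pow_cancel {N q : ℕ} {G : Matrix (Fin N) (Fin N) ℂ} (hG : G.IsHermitian) :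
    ∀ (k : ℕ) (Y : Matrix (Fin N) (Fin q) ℂ), G ^ (k + 1) * Y = 0 → G * Y = 0 := by
  intro k
  induction k with
  | zero => intro Y h; simpa using h
  | succ k ih =>
    intro Y h
    refine ih Y ?_
    have h' : G * (G * (G ^ k * Y)) = 0 := by
      simpa [pow_succ', Matrix.mul_assoc] using h
    have h2 := herm_sq_cancel hG (G ^ k * Y) h'
    simpa [pow_succ', Matrix.mul_assoc] using h2

section Pointwise

variable {m n r : ℕ} (B : Matrix (Fin m) (Fin n) ℂ)

/-- `Bᴴ (BBᴴ)^i = (BᴴB)^i Bᴴ`. -/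
lemma conjT_pow_exchange (i : ℕ) : Bᴴ * (B * Bᴴ) ^ i = (Bᴴ * B) ^ i * Bᴴ := by
  induction i with
  | zero => simp
  | succ i ih =>
    calc Bᴴ * (B * Bᴴ) ^ (i + 1) = Bᴴ * ((B * Bᴴ) * (B * Bᴴ) ^ i) := by rw [pow_succ']
      _ = (Bᴴ * B) * (Bᴴ * (B * Bᴴ) ^ i) := by
          simp only [Matrix.mul_assoc]
      _ = (Bᴴ * B) * ((Bᴴ * B) ^ i * Bᴴ) := by rw [ih]
      _ = (Bᴴ * B) ^ (i + 1) * Bᴴ := by rw [← Matrix.mul_assoc, ← pow_succ']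

lemma Smat_eq_K_mul : ∃ K : Matrix (Fin n) (Fin n) ℂ, Smat r B = K * Bᴴ := by
  refine ⟨(-((B * Bᴴ).charpoly.coeff (m - r))⁻¹) •
    ∑ i ∈ Finset.range r, (B * Bᴴ).charpoly.coeff (m - r + 1 + i) • (Bᴴ * B) ^ i, ?_⟩
  rw [Smat, Matrix.smul_mul, Matrix.sum_mul]
  congr 1
  refine Finset.sum_congr rfl fun i _ => ?_
  rw [Matrix.smul_mul, conjT_pow_exchange]

end Pointwise

section Rank

variable {m n r : ℕ} {B : Matrix (Fin m) (Fin n) ℂ}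

lemma Smat_conjTranspose (hrank : B.rank = r) :
    ∃ H' : Matrix (Fin m) (Fin m) ℂ, (Smat r B)ᴴ = H' * B := by
  have hG : (B * Bᴴ).IsHermitian := Matrix.isHermitian_mul_conjTranspose_self B
  have hreal := (coeff_facts hG (by rw [Matrix.rank_self_mul_conjTranspose, hrank])).2.2
  have hstar : ∀ k, star ((B * Bᴴ).charpoly.coeff k) = (B * Bᴴ).charpoly.coeff k := hreal
  refine ⟨(-((B * Bᴴ).charpoly.coeff (m - r))⁻¹) •
    ∑ i ∈ Finset.range r, (B * Bᴴ).charpoly.coeff (m - r + 1 + i) • (B * Bᴴ) ^ i, ?_⟩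
  rw [Smat, Matrix.conjTranspose_smul, Matrix.conjTranspose_sum,
    Matrix.smul_mul, Matrix.sum_mul, star_neg, star_inv₀, hstar]
  congr 1
  refine Finset.sum_congr rfl fun i _ => ?_
  rw [Matrix.conjTranspose_smul, hstar, Matrix.smul_mul]
  congr 1
  rw [Matrix.conjTranspose_mul, Matrix.conjTranspose_conjTranspose,
    Matrix.conjTranspose_pow, hG.eq]


lemma main_identity {m : ℕ} {G : Matrix (Fin m) (Fin m) ℂ} (hG : G.IsHermitian)
    {r z : ℕ} (hzr : z + r = m) (cp : ℕ → ℂ)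
    (hCH : ∑ k ∈ Finset.range (m + 1), cp k • G ^ k = 0)
    (hlow : ∀ j < z, cp j = 0) (hd : cp z ≠ 0) (hreal : ∀ k, star (cp k) = cp k)
    (H : Matrix (Fin m) (Fin m) ℂ)
    (hH : H = (-(cp z)⁻¹) • ∑ i ∈ Finset.range r, cp (z + 1 + i) • G ^ i) :
    G * (G * H) = G ∧ H * G = G * H ∧ Hᴴ = H := by
  have hIco : ∑ k ∈ Finset.Ico z (m + 1), cp k • G ^ k = 0 := by
    have hsplit := Finset.sum_range_add_sum_Ico (fun k => cp k • G ^ k)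
      (show z ≤ m + 1 by omega)
    have hzero : (∑ k ∈ Finset.range z, cp k • G ^ k) = 0 :=
      Finset.sum_eq_zero fun k hk => by
        rw [hlow k (Finset.mem_range.mp hk), zero_smul]
    rw [hzero, zero_add] at hsplit
    rw [hsplit, hCH]
  have hre : ∑ i ∈ Finset.range (r + 1), cp (z + i) • G ^ (z + i) = 0 := by
    rw [Finset.sum_Ico_eq_sum_range] at hIco
    have he : m + 1 - z = r + 1 := by omega
    rwa [he] at hIco
  have hGzQ : G ^ z * (∑ i ∈ Finset.range (r + 1), cp (z + i) • G ^ i) = 0 := by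
    rw [Finset.mul_sum, ← hre]
    refine Finset.sum_congr rfl fun i _ => ?_
    rw [Matrix.mul_smul, ← pow_add]
  have hGQ : G * (∑ i ∈ Finset.range (r + 1), cp (z + i) • G ^ i) = 0 := by
    rcases Nat.eq_zero_or_pos z with h0 | hpos
    · rw [h0] at hGzQ ⊢
      rw [pow_zero, Matrix.one_mul] at hGzQ
      rw [hGzQ, Matrix.mul_zero]
    · obtain ⟨k, hk⟩ := Nat.exists_eq_succ_of_ne_zero (Nat.pos_iff_ne_zero.mp hpos)
      refine herm_pow_cancel hG k _ ?_
      rw [show k + 1 = z from hk.symm]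
      exact hGzQ
  have hQdecomp : (∑ i ∈ Finset.range (r + 1), cp (z + i) • G ^ i)
      = G * (∑ i ∈ Finset.range r, cp (z + 1 + i) • G ^ i) + cp z • 1 := by
    rw [Finset.sum_range_succ', add_zero, pow_zero, Finset.mul_sum]
    congr 1
    refine Finset.sum_congr rfl fun i _ => ?_
    rw [show z + (i + 1) = z + 1 + i by omega, pow_succ', Matrix.mul_smul]
  have hGGR : G * (G * (∑ i ∈ Finset.range r, cp (z + 1 + i) • G ^ i)) = (-(cp z)) • G := by
    have h0 : G * (G * (∑ i ∈ Finset.range r, cp (z + 1 + i) • G ^ i) + cp z • 1) = 0 := by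
      rw [← hQdecomp]; exact hGQ
    rw [Matrix.mul_add, Matrix.mul_smul, Matrix.mul_one] at h0
    have h1 := eq_neg_of_add_eq_zero_left h0
    rw [h1, neg_smul]
  have hGGH : G * (G * H) = G := by
    rw [hH, Matrix.mul_smul, Matrix.mul_smul, hGGR, smul_smul, neg_mul_neg,
      inv_mul_cancel₀ hd, one_smul]
  have hRG : (∑ i ∈ Finset.range r, cp (z + 1 + i) • G ^ i) * G
      = G * (∑ i ∈ Finset.range r, cp (z + 1 + i) • G ^ i) := by
    rw [Finset.sum_mul, Finset.mul_sum]
    refine Finset.sum_congr rfl fun i _ => ?_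
    rw [Matrix.smul_mul, Matrix.mul_smul, ← pow_succ, ← pow_succ']
  have hHG : H * G = G * H := by
    rw [hH, Matrix.smul_mul, Matrix.mul_smul, hRG]
  have hHherm : Hᴴ = H := by
    rw [hH, Matrix.conjTranspose_smul, star_neg, star_inv₀, hreal, Matrix.conjTranspose_sum]
    congr 1
    refine Finset.sum_congr rfl fun i _ => ?_
    rw [Matrix.conjTranspose_smul, hreal, Matrix.conjTranspose_pow, hG.eq]
  exact ⟨hGGH, hHG, hHherm⟩


lemma PB_eq {B : Matrix (Fin m) (Fin n) ℂ} {H : Matrix (Fin m) (Fin m) ℂ}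
    (hGGH : (B * Bᴴ) * ((B * Bᴴ) * H) = B * Bᴴ)
    (hHG : H * (B * Bᴴ) = (B * Bᴴ) * H) (hHherm : Hᴴ = H) :
    B * (Bᴴ * H) * B = B := by
  set G := B * Bᴴ with hGdef
  set P := G * H with hPdef
  have hGherm : Gᴴ = G := (Matrix.isHermitian_mul_conjTranspose_self B).eq
  have hPG : P * G = G := by
    rw [hPdef, Matrix.mul_assoc, hHG, hGGH]
  have hPherm : Pᴴ = P := by
    rw [hPdef, Matrix.conjTranspose_mul, hHherm, hGherm, hHG]
  have hGP : G * P = G := by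
    have h := congrArg Matrix.conjTranspose hPG
    rw [Matrix.conjTranspose_mul, hPherm, hGherm] at h
    exact h
  have hPB : P * B = B := by
    have e1 : (P * B) * (Bᴴ * P) = G := by
      calc (P * B) * (Bᴴ * P) = P * ((B * Bᴴ) * P) := by simp only [Matrix.mul_assoc]
        _ = P * (G * P) := by rw [← hGdef]
        _ = P * G := by rw [hGP]
        _ = G := hPG
    have e2 : (P * B) * Bᴴ = G := by
      calc (P * B) * Bᴴ = P * (B * Bᴴ) := by rw [Matrix.mul_assoc]
        _ = P * G := by rw [← hGdef]
        _ = G := hPG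
    have e3 : B * (Bᴴ * P) = G := by
      calc B * (Bᴴ * P) = (B * Bᴴ) * P := by rw [Matrix.mul_assoc]
        _ = G * P := by rw [← hGdef]
        _ = G := hGP
    have hX : (P * B - B) * (P * B - B)ᴴ = 0 := by
      rw [Matrix.conjTranspose_sub, Matrix.conjTranspose_mul, hPherm]
      rw [Matrix.sub_mul, Matrix.mul_sub, Matrix.mul_sub]
      rw [e1, e2, e3, ← hGdef]
      simp
    have h5 : ((P * B - B)ᴴ)ᴴ * (P * B - B)ᴴ = 0 := by
      rw [Matrix.conjTranspose_conjTranspose]; exact hX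
    have h6 := Matrix.conjTranspose_mul_self_eq_zero.mp h5
    have h7 : P * B - B = 0 := by
      have h8 := congrArg Matrix.conjTranspose h6
      rwa [Matrix.conjTranspose_conjTranspose, Matrix.conjTranspose_zero] at h8
    exact sub_eq_zero.mp h7
  calc B * (Bᴴ * H) * B = ((B * Bᴴ) * H) * B := by rw [← Matrix.mul_assoc B Bᴴ H]
    _ = P * B := by rw [← hGdef, ← hPdef]
    _ = B := hPB

lemma mul_Smat_mul (hrank : B.rank = r) (hrm : r ≤ m) : B * Smat r B * B = B := by
  have hG : (B * Bᴴ).IsHermitian := Matrix.isHermitian_mul_conjTranspose_self B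
  obtain ⟨hlow, hd, hreal⟩ := coeff_facts hG
    (by rw [Matrix.rank_self_mul_conjTranspose, hrank])
  have hCH : ∑ k ∈ Finset.range (m + 1), (B * Bᴴ).charpoly.coeff k • (B * Bᴴ) ^ k = 0 := by
    have h1 := Matrix.aeval_self_charpoly (B * Bᴴ)
    rw [Polynomial.aeval_eq_sum_range] at h1
    simpa [Matrix.charpoly_natDegree_eq_dim] using h1
  obtain ⟨hGGH, hHG, hHherm⟩ := main_identity hG (show (m - r) + r = m by omega)
    (fun k => (B * Bᴴ).charpoly.coeff k) hCH hlow hd (fun k => hreal k) _ rfl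
  beta_reduce at hGGH hHG hHherm
  have hSmat : Smat r B = Bᴴ * ((-(((B * Bᴴ).charpoly.coeff (m - r)))⁻¹) •
      ∑ i ∈ Finset.range r, (B * Bᴴ).charpoly.coeff (m - r + 1 + i) • (B * Bᴴ) ^ i) := by
    rw [Smat, Matrix.mul_smul, Matrix.mul_sum]
    congr 1
    refine Finset.sum_congr rfl fun i _ => ?_
    rw [Matrix.mul_smul]
  rw [hSmat]
  exact PB_eq hGGH hHG hHherm

end Rank

open SmoothMRI in
lemma SM_Smat {d m n r : ℕ} {U : Set (EuclideanSpace ℝ (Fin d))}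
    {A : EuclideanSpace ℝ (Fin d) → Matrix (Fin m) (Fin n) ℂ}
    (hA : SM U A) (hrm : r ≤ m)
    (hd : ∀ x ∈ U, ((A x * (A x)ᴴ).charpoly.coeff (m - r)) ≠ 0) :
    SM U (fun x => Smat r (A x)) := by
  intro i j
  have hG : SM U (fun x => A x * (A x)ᴴ) := SM.mul hA (SM.conjTranspose hA)
  have hc : ∀ k, k ≤ m → ContDiffOn ℝ (⊤ : ℕ∞) (fun x => (A x * (A x)ᴴ).charpoly.coeff k) U :=
    fun k hk => contDiffOn_charpoly_coeff hG k hk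
  have hentry : (fun x => Smat r (A x) i j) = fun x =>
      (-((A x * (A x)ᴴ).charpoly.coeff (m - r))⁻¹) *
        ∑ l ∈ Finset.range r, (A x * (A x)ᴴ).charpoly.coeff (m - r + 1 + l) *
          (((A x)ᴴ * (A x * (A x)ᴴ) ^ l) i j) := by
    funext x
    simp [Smat, Matrix.smul_apply, Matrix.sum_apply, smul_eq_mul]
  rw [hentry]
  refine ContDiffOn.mul (((hc (m - r) (by omega)).inv hd).neg) ?_
  refine ContDiffOn.sum fun l hl => ?_
  refine ContDiffOn.mul (hc _ (by have := Finset.mem_range.mp hl; omega)) ?_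
  exact (SM.mul (SM.conjTranspose hA) (SM.pow hG l)) i j

end SmoothMRI3

open scoped ComplexOrder in
open SmoothMRI SmoothMRI2 SmoothMRI3 in
theorem smooth_minimalRightInverse_of_constant_rank' {d m n : ℕ}
    (U : Set (EuclideanSpace ℝ (Fin d))) (hUopen : IsOpen U)
    (A : EuclideanSpace ℝ (Fin d) → Matrix (Fin m) (Fin n) ℂ)
    (hA : ∀ i j, ContDiffOn ℝ (⊤ : ℕ∞) (fun x => A x i j) U)
    (r : ℕ) (hr : ∀ x ∈ U, (A x).rank = r) :
    ∃ S : EuclideanSpace ℝ (Fin d) → Matrix (Fin n) (Fin m) ℂ,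
      (∀ i j, ContDiffOn ℝ (⊤ : ℕ∞) (fun x => S x i j) U) ∧
      ∀ x ∈ U,
        (∀ y : Fin m → ℂ, (∃ v : Fin n → ℂ, (A x).mulVec v = y) →
          (A x).mulVec ((S x).mulVec y) = y) ∧
        (∀ y : Fin m → ℂ,
          (∀ v : Fin n → ℂ, ∑ i, conj ((A x).mulVec v i) * y i = 0) →
          (S x).mulVec y = 0) ∧
        (∀ y : Fin m → ℂ, ∀ v : Fin n → ℂ, (A x).mulVec v = 0 →
          ∑ j, conj ((S x).mulVec y j) * v j = 0) := by
  classical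
  by_cases hU : ∃ x₀, x₀ ∈ U
  · obtain ⟨x₀, hx₀⟩ := hU
    have hrm : r ≤ m := by
      have h1 := hr x₀ hx₀
      have h2 := Matrix.rank_le_height (A x₀)
      omega
    refine ⟨fun x => Smat r (A x), ?_, ?_⟩
    · have hd : ∀ x ∈ U, ((A x * (A x)ᴴ).charpoly.coeff (m - r)) ≠ 0 := fun x hx => by
        have hG : (A x * (A x)ᴴ).IsHermitian := Matrix.isHermitian_mul_conjTranspose_self _
        exact (coeff_facts hG (by rw [Matrix.rank_self_mul_conjTranspose, hr x hx])).2.1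
      exact SM_Smat (fun i j => hA i j) hrm hd
    · intro x hx
      beta_reduce
      set B := A x with hB
      have hrank : B.rank = r := hr x hx
      have h1 : B * Smat r B * B = B := mul_Smat_mul hrank hrm
      obtain ⟨K, hK⟩ := Smat_eq_K_mul (r := r) B
      obtain ⟨H', hH'⟩ := Smat_conjTranspose hrank
      refine ⟨?_, ?_, ?_⟩
      · rintro y ⟨v, rfl⟩
        rw [Matrix.mulVec_mulVec, Matrix.mulVec_mulVec, h1]
      · intro y hy
        have hBty : Bᴴ *ᵥ y = 0 := by
          funext j
          have h2 := hy (Pi.single j 1)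
          simp only [Matrix.mulVec_single, mul_one] at h2
          simpa [Matrix.mulVec, dotProduct, Matrix.conjTranspose_apply] using h2
        rw [hK, ← Matrix.mulVec_mulVec, hBty, Matrix.mulVec_zero]
      · intro y v hv
        have hstep : (Smat r B)ᴴ *ᵥ v = 0 := by
          rw [hH', ← Matrix.mulVec_mulVec, hv, Matrix.mulVec_zero]
        calc ∑ j, conj ((Smat r B *ᵥ y) j) * v j
            = star (Smat r B *ᵥ y) ⬝ᵥ v := by
              simp only [dotProduct, Pi.star_apply, starRingEnd_apply]
          _ = (star y ᵥ* (Smat r B)ᴴ) ⬝ᵥ v := by rw [Matrix.star_mulVec]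
          _ = star y ⬝ᵥ ((Smat r B)ᴴ *ᵥ v) := (Matrix.dotProduct_mulVec _ _ _).symm
          _ = 0 := by rw [hstep, dotProduct_zero]
  · refine ⟨fun _ => 0, fun i j => ?_, fun x hx => absurd ⟨x, hx⟩ hU⟩
    simpa using contDiffOn_const

/-- A `C^∞` family `A` of complex `m × n` matrices on an open set `U ⊆ ℝ^d` of constant
rank `r` admits a `C^∞` family `S` of matrices such that at each point of `U` the map
`w ↦ S x *ᵥ w` is the minimal right inverse of `v ↦ A x *ᵥ v` with respect to the
standard Hermitian inner products: `A x ∘ S x` is the identity on the column space of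
`A x`, `S x` kills the Hermitian orthogonal complement of the column space of `A x`,
and the column space of `S x` is Hermitian-orthogonal to the kernel of `A x`. -/
theorem smooth_minimalRightInverse_of_constant_rank {d m n : ℕ}
    (U : Set (EuclideanSpace ℝ (Fin d))) (hUopen : IsOpen U)
    (A : EuclideanSpace ℝ (Fin d) → Matrix (Fin m) (Fin n) ℂ)
    (hA : ∀ i j, ContDiffOn ℝ (⊤ : ℕ∞) (fun x => A x i j) U)
    (r : ℕ) (hr : ∀ x ∈ U, (A x).rank = r) :
    ∃ S : EuclideanSpace ℝ (Fin d) → Matrix (Fin n) (Fin m) ℂ,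
      (∀ i j, ContDiffOn ℝ (⊤ : ℕ∞) (fun x => S x i j) U) ∧
      ∀ x ∈ U,
        (∀ y : Fin m → ℂ, (∃ v : Fin n → ℂ, (A x).mulVec v = y) →
          (A x).mulVec ((S x).mulVec y) = y) ∧
        (∀ y : Fin m → ℂ,
          (∀ v : Fin n → ℂ, ∑ i, conj ((A x).mulVec v i) * y i = 0) →
          (S x).mulVec y = 0) ∧
        (∀ y : Fin m → ℂ, ∀ v : Fin n → ℂ, (A x).mulVec v = 0 →
          ∑ j, conj ((S x).mulVec y j) * v j = 0) :=
  smooth_minimalRightInverse_of_constant_rank' U hUopen A hA r hr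
end
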